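/- arXiv:2602.17230 — 9 statements merged into one kernel-verified Lean document; each statement's English description precedes it below -/
import Mathlib

section
/- For all integers r ≥ 1 and s ≥ 1, setting μ = 15 + r + s, the following inequality of rational numbers holds: (7/8 − 3/2)² + (5/4 − 3/2)² + (11/8 − 3/2)² + (3/2 − 3/2)² + (13/8 − 3/2)² + (7/4 − 3/2)² + (17/8 − 3/2)² + ∑_{u=1}^{r+4} ((2u + 2r + 7)/(2(r+4)) − 3/2)² + ∑_{v=1}^{s+4} ((2v + 2s + 7)/(2(s+4)) − 3/2)² ≤ (μ/12)·(17/8 − 7/8). -/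
/-!
Both families of spectrum numbers are blocks of `N` equally spaced numbers of step `1/N`
centred at `3/2` (with `N = r + 4`, resp. `N = s + 4`), so each block contributes
`1/N²` times the sum of squared deviations of `1, …, N` from their mean, namely
`(N² - 1) / (12 N)`, which is at most `5 (N - 1) / 48` as soon as `N ≥ 4`.
The seven remaining numbers contribute `15/16 = 5 · 9 / 48`, and the three bounds add up
exactly to `μ · (17/8 - 7/8) / 12 = 5 (15 + r + s) / 48`.
-/

open Finset

section Variance

variable {K : Type*} [Field K] [CharZero K]

theorem sum_Icc_sub_sq (N : ℕ) (c : K) :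
    ∑ u ∈ Icc 1 N, ((u : K) - c) ^ 2 =
      N * (N + 1) * (2 * N + 1) / 6 - c * N * (N + 1) + N * c ^ 2 := by
  induction N with
  | zero => simp
  | succ n ih =>
    rw [sum_Icc_succ_top (by omega), ih]
    push_cast
    ring

theorem sum_Icc_sub_midpoint_sq (N : ℕ) :
    ∑ u ∈ Icc 1 N, ((u : K) - (N + 1) / 2) ^ 2 = ((N : K) - 1) * N * (N + 1) / 12 := by
  rw [sum_Icc_sub_sq]
  ring

end Variance

theorem sum_spectrumBlock_sq_eq (r : ℕ) :
    ∑ u ∈ Icc 1 (r + 4), ((2 * (u : ℚ) + 2 * (r : ℚ) + 7) / (2 * ((r : ℚ) + 4)) - 3/2) ^ 2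
      = ((r : ℚ) + 3) * ((r : ℚ) + 5) / (12 * ((r : ℚ) + 4)) := by
  have h_term : ∀ u : ℕ,
      ((2 * (u : ℚ) + 2 * (r : ℚ) + 7) / (2 * ((r : ℚ) + 4)) - 3/2) ^ 2
        = ((u : ℚ) - ((r + 4 : ℕ) + 1) / 2) ^ 2 / ((r : ℚ) + 4) ^ 2 := by
    intro u
    push_cast
    field_simp
    ring
  simp only [h_term, ← sum_div, sum_Icc_sub_midpoint_sq]
  push_cast
  field_simp
  ring

theorem sum_spectrumBlock_sq_le (r : ℕ) :
    ∑ u ∈ Icc 1 (r + 4), ((2 * (u : ℚ) + 2 * (r : ℚ) + 7) / (2 * ((r : ℚ) + 4)) - 3/2) ^ 2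
      ≤ 5 * ((r : ℚ) + 3) / 48 := by
  rw [sum_spectrumBlock_sq_eq, div_le_div_iff₀ (by positivity) (by norm_num)]
  nlinarith [(r.cast_nonneg : (0 : ℚ) ≤ r)]

theorem stmt_3_general (r s : ℕ) :
    ((7/8 : ℚ) - 3/2) ^ 2 +
      ((5/4 : ℚ) - 3/2) ^ 2 +
      ((11/8 : ℚ) - 3/2) ^ 2 +
      ((3/2 : ℚ) - 3/2) ^ 2 +
      ((13/8 : ℚ) - 3/2) ^ 2 +
      ((7/4 : ℚ) - 3/2) ^ 2 +
      ((17/8 : ℚ) - 3/2) ^ 2 +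
      ∑ u ∈ Finset.Icc 1 (r + 4), ((2 * (u : ℚ) + 2 * (r : ℚ) + 7) / (2 * ((r : ℚ) + 4)) - 3/2) ^ 2 +
      ∑ v ∈ Finset.Icc 1 (s + 4), ((2 * (v : ℚ) + 2 * (s : ℚ) + 7) / (2 * ((s : ℚ) + 4)) - 3/2) ^ 2
    ≤ ((15 + (r : ℚ) + (s : ℚ)) / 12) * (17/8 - 7/8) := by
  have h_r := sum_spectrumBlock_sq_le r
  have h_s := sum_spectrumBlock_sq_le s
  norm_num
  linarith

theorem stmt_3 (r s : ℕ) (hr : 1 ≤ r) (hs : 1 ≤ s) :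
    ((7/8 : ℚ) - 3/2) ^ 2 +
      ((5/4 : ℚ) - 3/2) ^ 2 +
      ((11/8 : ℚ) - 3/2) ^ 2 +
      ((3/2 : ℚ) - 3/2) ^ 2 +
      ((13/8 : ℚ) - 3/2) ^ 2 +
      ((7/4 : ℚ) - 3/2) ^ 2 +
      ((17/8 : ℚ) - 3/2) ^ 2 +
      ∑ u ∈ Finset.Icc 1 (r + 4), ((2 * (u : ℚ) + 2 * (r : ℚ) + 7) / (2 * ((r : ℚ) + 4)) - 3/2) ^ 2 +
      ∑ v ∈ Finset.Icc 1 (s + 4), ((2 * (v : ℚ) + 2 * (s : ℚ) + 7) / (2 * ((s : ℚ) + 4)) - 3/2) ^ 2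
    ≤ ((15 + (r : ℚ) + (s : ℚ)) / 12) * (17/8 - 7/8) :=
  stmt_3_general r s
end

section
/- For every integer k ≥ 0, setting μ = 16 + 2k, the following inequality of rational numbers holds: (7/8 − 3/2)² + (9/8 − 3/2)² + 2·(11/8 − 3/2)² + 2·(13/8 − 3/2)² + (15/8 − 3/2)² + (17/8 − 3/2)² + ∑_{l=1}^{2k+8} ((l + 2k + 9)/(2k+9) − 3/2)² ≤ (μ/12)·(17/8 − 7/8). -/
/-!
With `n = 2k + 9`, the summands are `(l / n - 1 / 2) ^ 2` for `1 ≤ l ≤ n - 1`, and the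
formulas for `∑ l` and `∑ l ^ 2` give `∑ (l / n - 1 / 2) ^ 2 = (n - 1) (n - 2) / (12 n)`.
The six explicit terms add up to `9 / 8`, and the inequality reduces to
`0 ≤ (2k ^ 2 + 11k + 5) / (24 (2k + 9))`.
-/

open Finset

section

variable {K : Type*} [Field K] [CharZero K]

theorem sum_Icc_natCast_mul_sub_half_sq (x : K) (m : ℕ) :
    ∑ l ∈ Icc 1 m, ((l : K) * x - 1 / 2) ^ 2 =
      m * (m + 1) * (2 * m + 1) / 6 * x ^ 2 - m * (m + 1) / 2 * x + m / 4 := by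
  induction m with
  | zero => simp
  | succ m ih =>
    rw [sum_Icc_succ_top (by omega), ih]
    push_cast
    ring

theorem sum_Icc_div_succ_sub_half_sq (m : ℕ) :
    ∑ l ∈ Icc 1 m, ((l : K) / (m + 1) - 1 / 2) ^ 2 = (m : K) * (m - 1) / (12 * (m + 1)) := by
  have hm : (m : K) + 1 ≠ 0 := Nat.cast_add_one_ne_zero m
  simp_rw [div_eq_mul_inv (_ : K) ((m : K) + 1)]
  rw [sum_Icc_natCast_mul_sub_half_sq]
  field_simp
  ring

end

theorem stmt_5 (k : ℕ) :
    ((7/8 : ℚ) - 3/2) ^ 2 +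
      ((9/8 : ℚ) - 3/2) ^ 2 +
      2 * ((11/8 : ℚ) - 3/2) ^ 2 +
      2 * ((13/8 : ℚ) - 3/2) ^ 2 +
      ((15/8 : ℚ) - 3/2) ^ 2 +
      ((17/8 : ℚ) - 3/2) ^ 2 +
      ∑ l ∈ Finset.Icc 1 (2 * k + 8), (((l : ℚ) + 2 * (k : ℚ) + 9) / (2 * (k : ℚ) + 9) - 3/2) ^ 2
    ≤ ((16 + 2 * (k : ℚ)) / 12) * (17/8 - 7/8) := by
  have hden : (2 * (k : ℚ) + 9) ≠ 0 := by positivity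
  have hshift (l : ℕ) : ((l : ℚ) + 2 * k + 9) / (2 * k + 9) - 3 / 2 =
      l / (((2 * k + 8 : ℕ) : ℚ) + 1) - 1 / 2 := by
    push_cast
    field_simp
    ring
  simp_rw [hshift, sum_Icc_div_succ_sub_half_sq]
  rw [← sub_nonneg]
  convert (by positivity : (0 : ℚ) ≤ (2 * k ^ 2 + 11 * k + 5) / (24 * (2 * k + 9))) using 1
  push_cast
  field_simp
  ring
end

section
/- For all integers k ≥ 1 and s ≥ 1, setting μ = 15 + 2k + s, the following inequality of rational numbers holds: (7/8 − 3/2)² + (11/8 − 3/2)² + (13/8 − 3/2)² + (17/8 − 3/2)² + ∑_{u=1}^{2k+7} ((u + 2k + 8)/(2(k+4)) − 3/2)² + ∑_{v=1}^{s+4} ((2v + 2s + 7)/(2(s+4)) − 3/2)² ≤ (μ/12)·(17/8 − 7/8). -/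
/-!
After subtracting the centre `3/2`, both families of spectrum numbers are arithmetic progressions
symmetric about `0`: `(2u - (n + 1)) / c` for `u = 1, …, n`. For such a progression
`∑ (2u - (n + 1))² = (n - 1) n (n + 1) / 3`, so the left-hand side has the closed form
`(75 + 8k + 4s)/48 + (1/(k+4) - 1/(s+4))/12`, while the right-hand side is `(75 + 10k + 5s)/48`;
the inequality then follows from `1/(k+4) ≤ 1/4` and `1/4 - 1/(s+4) ≤ s/4`.
-/

open Finset

theorem three_mul_sum_Icc_sq_two_mul_sub {R : Type*} [CommRing R] (n : ℕ) (c : R) :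
    3 * ∑ i ∈ Icc 1 n, (2 * (i : R) - c) ^ 2 =
      n * (2 * (n + 1) * (2 * n + 1) - 6 * c * (n + 1) + 3 * c ^ 2) := by
  induction n with
  | zero => simp
  | succ n ih =>
    rw [sum_Icc_succ_top (by omega), mul_add, ih]
    push_cast
    ring

theorem three_mul_sum_Icc_sq_two_mul_sub_add_one {R : Type*} [CommRing R] (n : ℕ) :
    3 * ∑ i ∈ Icc 1 n, (2 * (i : R) - (n + 1)) ^ 2 = ((n : R) - 1) * n * (n + 1) := by
  rw [three_mul_sum_Icc_sq_two_mul_sub]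
  ring

theorem sum_Icc_sq_two_mul_sub_add_one_div {K : Type*} [Field K] [CharZero K] (n : ℕ) (c : K) :
    ∑ i ∈ Icc 1 n, ((2 * (i : K) - (n + 1)) / c) ^ 2 = ((n : K) - 1) * n * (n + 1) / (3 * c ^ 2) := by
  simp_rw [div_pow, ← sum_div]
  rw [← three_mul_sum_Icc_sq_two_mul_sub_add_one, mul_div_mul_left _ _ three_ne_zero]

theorem sum_sq_sub_three_halves_first_block (k : ℕ) :
    ∑ u ∈ Icc 1 (2 * k + 7), (((u : ℚ) + 2 * k + 8) / (2 * (k + 4)) - 3/2) ^ 2 =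
      (2 * (k : ℚ) + 5) / 12 + 1 / (12 * (k + 4)) := by
  have centered (u : ℕ) : ((u : ℚ) + 2 * k + 8) / (2 * (k + 4)) - 3/2 =
      (2 * u - (((2 * k + 7 : ℕ) : ℚ) + 1)) / (4 * (k + 4)) := by
    push_cast; field_simp; ring
  simp_rw [centered, sum_Icc_sq_two_mul_sub_add_one_div]
  push_cast
  field_simp
  ring

theorem sum_sq_sub_three_halves_second_block (s : ℕ) :
    ∑ v ∈ Icc 1 (s + 4), ((2 * (v : ℚ) + 2 * s + 7) / (2 * (s + 4)) - 3/2) ^ 2 =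
      ((s : ℚ) + 4) / 12 - 1 / (12 * (s + 4)) := by
  have centered (v : ℕ) : (2 * (v : ℚ) + 2 * s + 7) / (2 * (s + 4)) - 3/2 =
      (2 * v - (((s + 4 : ℕ) : ℚ) + 1)) / (2 * (s + 4)) := by
    push_cast; field_simp; ring
  simp_rw [centered, sum_Icc_sq_two_mul_sub_add_one_div]
  push_cast
  field_simp
  ring

theorem stmt_6_general (k s : ℕ) :
    ((7/8 : ℚ) - 3/2) ^ 2 +
      ((11/8 : ℚ) - 3/2) ^ 2 +
      ((13/8 : ℚ) - 3/2) ^ 2 +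
      ((17/8 : ℚ) - 3/2) ^ 2 +
      ∑ u ∈ Finset.Icc 1 (2 * k + 7), (((u : ℚ) + 2 * (k : ℚ) + 8) / (2 * ((k : ℚ) + 4)) - 3/2) ^ 2 +
      ∑ v ∈ Finset.Icc 1 (s + 4), ((2 * (v : ℚ) + 2 * (s : ℚ) + 7) / (2 * ((s : ℚ) + 4)) - 3/2) ^ 2
    ≤ ((15 + 2 * (k : ℚ) + (s : ℚ)) / 12) * (17/8 - 7/8) := by
  have bound_k : 1 / (12 * ((k : ℚ) + 4)) ≤ 1 / 48 := by
    rw [div_le_div_iff₀ (by positivity) (by norm_num)]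
    linarith [k.cast_nonneg (α := ℚ)]
  have bound_s : (1 - s) / 48 ≤ 1 / (12 * ((s : ℚ) + 4)) := by
    rw [div_le_div_iff₀ (by norm_num) (by positivity)]
    nlinarith [s.cast_nonneg (α := ℚ)]
  rw [sum_sq_sub_three_halves_first_block, sum_sq_sub_three_halves_second_block]
  linarith [k.cast_nonneg (α := ℚ)]

theorem stmt_6 (k s : ℕ) (hk : 1 ≤ k) (hs : 1 ≤ s) :
    ((7/8 : ℚ) - 3/2) ^ 2 +
      ((11/8 : ℚ) - 3/2) ^ 2 +
      ((13/8 : ℚ) - 3/2) ^ 2 +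
      ((17/8 : ℚ) - 3/2) ^ 2 +
      ∑ u ∈ Finset.Icc 1 (2 * k + 7), (((u : ℚ) + 2 * (k : ℚ) + 8) / (2 * ((k : ℚ) + 4)) - 3/2) ^ 2 +
      ∑ v ∈ Finset.Icc 1 (s + 4), ((2 * (v : ℚ) + 2 * (s : ℚ) + 7) / (2 * ((s : ℚ) + 4)) - 3/2) ^ 2
    ≤ ((15 + 2 * (k : ℚ) + (s : ℚ)) / 12) * (17/8 - 7/8) :=
  stmt_6_general k s
end

section
/- For every integer s ≥ 1, setting μ = 17 + s, the following inequality of rational numbers holds: (6/7 − 3/2)² + (15/14 − 3/2)² + (17/14 − 3/2)² + (9/7 − 3/2)² + (19/14 − 3/2)² + (10/7 − 3/2)² + (3/2 − 3/2)² + (11/7 − 3/2)² + (23/14 − 3/2)² + (12/7 − 3/2)² + (25/14 − 3/2)² + (27/14 − 3/2)² + (15/7 − 3/2)² + ∑_{l=1}^{s+4} ((2l + 2s + 7)/(2(s+4)) − 3/2)² ≤ (μ/12)·(15/7 − 6/7). -/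
/-! The thirteen isolated spectrum numbers contribute `294 / 14² = 3/2` to the sum of squared
deviations from `3/2`. The remaining `n = s + 4` numbers `(2l + 2n - 1) / (2n)` are equally spaced
with step `1/n` and symmetric about `3/2`, so they contribute `(n² - 1) / (12 n)`. The inequality
then reduces to `0 ≤ (2n - 7)(n - 1)`, which holds since `n ≥ 4`. -/

open Finset

theorem sum_Icc_sq_affine {R : Type*} [CommRing R] (a b : R) (n : ℕ) :
    6 * ∑ l ∈ Icc 1 n, (a + b * l) ^ 2 =
      n * (6 * a ^ 2 + 6 * a * b * (n + 1) + b ^ 2 * (n + 1) * (2 * n + 1)) := by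
  induction n with
  | zero => simp
  | succ n ih =>
    rw [sum_Icc_succ_top (by omega), mul_add, ih]
    push_cast
    ring

theorem sum_sq_equallySpaced_sub_center {K : Type*} [Field K] [CharZero K] (n : ℕ) :
    ∑ l ∈ Icc 1 n, ((2 * l + 2 * n - 1) / (2 * n) - 3 / 2 : K) ^ 2 = (n ^ 2 - 1) / (12 * n) := by
  rcases Nat.eq_zero_or_pos n with rfl | hn
  · simp
  have hn' : (n : K) ≠ 0 := Nat.cast_ne_zero.mpr hn.ne'
  have hterm : ∀ l : ℕ, ((2 * l + 2 * n - 1) / (2 * n) - 3 / 2 : K) ^ 2 =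
      (-(n + 1) + 2 * l : K) ^ 2 / (4 * n ^ 2) := by
    intro l
    field_simp
    ring
  rw [sum_congr rfl fun l _ => hterm l, ← sum_div, div_eq_div_iff (by simp [hn']) (by simp [hn'])]
  have hsum := sum_Icc_sq_affine (-(n + 1 : K)) 2 n
  linear_combination (2 : K) * n * hsum

theorem stmt_8_general (s : ℕ) :
    ((6/7 : ℚ) - 3/2) ^ 2 +
      ((15/14 : ℚ) - 3/2) ^ 2 +
      ((17/14 : ℚ) - 3/2) ^ 2 +
      ((9/7 : ℚ) - 3/2) ^ 2 +
      ((19/14 : ℚ) - 3/2) ^ 2 +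
      ((10/7 : ℚ) - 3/2) ^ 2 +
      ((3/2 : ℚ) - 3/2) ^ 2 +
      ((11/7 : ℚ) - 3/2) ^ 2 +
      ((23/14 : ℚ) - 3/2) ^ 2 +
      ((12/7 : ℚ) - 3/2) ^ 2 +
      ((25/14 : ℚ) - 3/2) ^ 2 +
      ((27/14 : ℚ) - 3/2) ^ 2 +
      ((15/7 : ℚ) - 3/2) ^ 2 +
      ∑ l ∈ Finset.Icc 1 (s + 4), ((2 * (l : ℚ) + 2 * (s : ℚ) + 7) / (2 * ((s : ℚ) + 4)) - 3/2) ^ 2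
    ≤ ((17 + (s : ℚ)) / 12) * (15/7 - 6/7) := by
  set n : ℚ := s + 4 with hn
  have hspectrum : ∑ l ∈ Icc 1 (s + 4),
      ((2 * (l : ℚ) + 2 * (s : ℚ) + 7) / (2 * n) - 3/2) ^ 2 = (n ^ 2 - 1) / (12 * n) := by
    convert sum_sq_equallySpaced_sub_center (K := ℚ) (s + 4) using 4 with l <;> push_cast <;> ring
  have h4 : (4 : ℚ) ≤ n := by simp [hn]
  have hn0 : n ≠ 0 := by positivity
  rw [hspectrum, ← sub_nonneg]
  have hgap : (17 + (s : ℚ)) / 12 * (15/7 - 6/7) - ((6/7 - 3/2) ^ 2 + (15/14 - 3/2) ^ 2 +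
      (17/14 - 3/2) ^ 2 + (9/7 - 3/2) ^ 2 + (19/14 - 3/2) ^ 2 + (10/7 - 3/2) ^ 2 + (3/2 - 3/2) ^ 2 +
      (11/7 - 3/2) ^ 2 + (23/14 - 3/2) ^ 2 + (12/7 - 3/2) ^ 2 + (25/14 - 3/2) ^ 2 +
      (27/14 - 3/2) ^ 2 + (15/7 - 3/2) ^ 2 + (n ^ 2 - 1) / (12 * n)) =
      (2 * n - 7) * (n - 1) / (84 * n) := by
    field_simp
    ring
  rw [hgap]
  exact div_nonneg (mul_nonneg (by linarith) (by linarith)) (by positivity)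

theorem stmt_8 (s : ℕ) (hs : 1 ≤ s) :
    ((6/7 : ℚ) - 3/2) ^ 2 +
      ((15/14 : ℚ) - 3/2) ^ 2 +
      ((17/14 : ℚ) - 3/2) ^ 2 +
      ((9/7 : ℚ) - 3/2) ^ 2 +
      ((19/14 : ℚ) - 3/2) ^ 2 +
      ((10/7 : ℚ) - 3/2) ^ 2 +
      ((3/2 : ℚ) - 3/2) ^ 2 +
      ((11/7 : ℚ) - 3/2) ^ 2 +
      ((23/14 : ℚ) - 3/2) ^ 2 +
      ((12/7 : ℚ) - 3/2) ^ 2 +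
      ((25/14 : ℚ) - 3/2) ^ 2 +
      ((27/14 : ℚ) - 3/2) ^ 2 +
      ((15/7 : ℚ) - 3/2) ^ 2 +
      ∑ l ∈ Finset.Icc 1 (s + 4), ((2 * (l : ℚ) + 2 * (s : ℚ) + 7) / (2 * ((s : ℚ) + 4)) - 3/2) ^ 2
    ≤ ((17 + (s : ℚ)) / 12) * (15/7 - 6/7) :=
  stmt_8_general s
end

section
/- For every integer s ≥ 1, setting μ = 18 + s, the following inequality of rational numbers holds: (17/20 − 3/2)² + (21/20 − 3/2)² + (6/5 − 3/2)² + (5/4 − 3/2)² + (27/20 − 3/2)² + (7/5 − 3/2)² + (29/20 − 3/2)² + (31/20 − 3/2)² + (8/5 − 3/2)² + (33/20 − 3/2)² + (7/4 − 3/2)² + (9/5 − 3/2)² + (39/20 − 3/2)² + (43/20 − 3/2)² + ∑_{l=1}^{s+4} ((2l + 2s + 7)/(2(s+4)) − 3/2)² ≤ (μ/12)·(43/20 − 17/20). -/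
/-!
With `m = s + 4`, the fourteen isolated spectral numbers contribute `13/8` to the sum of squares,
while the remaining `m` are `3/2 + (l - (m + 1)/2)/m` for `l = 1, …, m`, equally spaced and
symmetric about `3/2`, contributing `(m² - 1)/(12 m)` (the variance of the discrete uniform
distribution). Clearing denominators, the inequality becomes `(3m - 10)(m - 1) ≥ 0`, true for `m ≥ 4`.
-/

open Finset

section SumOfSquares

variable {K : Type*} [Field K] [CharZero K]

theorem sum_Icc_sq_sub (m : ℕ) (c : K) :
    ∑ l ∈ Icc 1 m, ((l : K) - c) ^ 2
      = m * (m + 1) * (2 * m + 1) / 6 - c * m * (m + 1) + m * c ^ 2 := by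
  induction m with
  | zero => simp
  | succ n ih =>
    rw [sum_Icc_succ_top (by omega), ih]
    push_cast
    ring

theorem sum_Icc_sq_sub_mean (m : ℕ) :
    ∑ l ∈ Icc 1 m, ((l : K) - (m + 1) / 2) ^ 2 = (m : K) * (m ^ 2 - 1) / 12 := by
  rw [sum_Icc_sq_sub]
  ring

end SumOfSquares

theorem stmt_9_general (s : ℕ) :
    ((17/20 : ℚ) - 3/2) ^ 2 +
      ((21/20 : ℚ) - 3/2) ^ 2 +
      ((6/5 : ℚ) - 3/2) ^ 2 +
      ((5/4 : ℚ) - 3/2) ^ 2 +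
      ((27/20 : ℚ) - 3/2) ^ 2 +
      ((7/5 : ℚ) - 3/2) ^ 2 +
      ((29/20 : ℚ) - 3/2) ^ 2 +
      ((31/20 : ℚ) - 3/2) ^ 2 +
      ((8/5 : ℚ) - 3/2) ^ 2 +
      ((33/20 : ℚ) - 3/2) ^ 2 +
      ((7/4 : ℚ) - 3/2) ^ 2 +
      ((9/5 : ℚ) - 3/2) ^ 2 +
      ((39/20 : ℚ) - 3/2) ^ 2 +
      ((43/20 : ℚ) - 3/2) ^ 2 +
      ∑ l ∈ Finset.Icc 1 (s + 4), ((2 * (l : ℚ) + 2 * (s : ℚ) + 7) / (2 * ((s : ℚ) + 4)) - 3/2) ^ 2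
    ≤ ((18 + (s : ℚ)) / 12) * (43/20 - 17/20) := by
  have hsum : ∑ l ∈ Icc 1 (s + 4),
      ((2 * (l : ℚ) + 2 * (s : ℚ) + 7) / (2 * ((s : ℚ) + 4)) - 3/2) ^ 2
      = (((s : ℚ) + 4) ^ 2 - 1) / (12 * ((s : ℚ) + 4)) :=
    calc _ = ∑ l ∈ Icc 1 (s + 4),
          ((l : ℚ) - ((s + 4 : ℕ) + 1) / 2) ^ 2 / ((s : ℚ) + 4) ^ 2 := by
          refine sum_congr rfl fun l _ => ?_
          push_cast
          field_simp
          ring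
      _ = _ := by
          rw [← sum_div, sum_Icc_sq_sub_mean]
          push_cast
          field_simp
  rw [hsum, ← sub_nonneg]
  have hgap : ((18 + (s : ℚ)) / 12) * (43/20 - 17/20) - (13/8 + (((s : ℚ) + 4) ^ 2 - 1) /
      (12 * ((s : ℚ) + 4))) = (3 * s + 2) * (s + 3) / (120 * (s + 4)) := by
    field_simp
    ring
  -- `norm_num` sums the fourteen constant squares to `13/8`, matching `hgap`.
  norm_num only at hgap ⊢
  rw [hgap]
  positivity

theorem stmt_9 (s : ℕ) (hs : 1 ≤ s) :
    ((17/20 : ℚ) - 3/2) ^ 2 +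
      ((21/20 : ℚ) - 3/2) ^ 2 +
      ((6/5 : ℚ) - 3/2) ^ 2 +
      ((5/4 : ℚ) - 3/2) ^ 2 +
      ((27/20 : ℚ) - 3/2) ^ 2 +
      ((7/5 : ℚ) - 3/2) ^ 2 +
      ((29/20 : ℚ) - 3/2) ^ 2 +
      ((31/20 : ℚ) - 3/2) ^ 2 +
      ((8/5 : ℚ) - 3/2) ^ 2 +
      ((33/20 : ℚ) - 3/2) ^ 2 +
      ((7/4 : ℚ) - 3/2) ^ 2 +
      ((9/5 : ℚ) - 3/2) ^ 2 +
      ((39/20 : ℚ) - 3/2) ^ 2 +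
      ((43/20 : ℚ) - 3/2) ^ 2 +
      ∑ l ∈ Finset.Icc 1 (s + 4), ((2 * (l : ℚ) + 2 * (s : ℚ) + 7) / (2 * ((s : ℚ) + 4)) - 3/2) ^ 2
    ≤ ((18 + (s : ℚ)) / 12) * (43/20 - 17/20) :=
  stmt_9_general s
end

section
/- For every integer k ≥ 1, setting μ = 17 + 2k, the following inequality of rational numbers holds: (13/15 − 3/2)² + (16/15 − 3/2)² + (19/15 − 3/2)² + (4/3 − 3/2)² + (22/15 − 3/2)² + (23/15 − 3/2)² + (5/3 − 3/2)² + (26/15 − 3/2)² + (29/15 − 3/2)² + (32/15 − 3/2)² + ∑_{l=1}^{2k+7} ((l + 2k + 8)/(2(k+4)) − 3/2)² ≤ (μ/12)·(32/15 − 13/15). -/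
/-!
The numbers `(l + 2k + 8) / (2(k + 4))`, `1 ≤ l ≤ 2k + 7`, form an arithmetic progression with
step `1 / (2(k + 4))` centred at `3/2`, so the sum of their squared deviations from `3/2` is
`(k + 3)(2k + 7) / (12(k + 4))` by the formula for `∑ l²`. The ten remaining spectrum numbers
contribute `121/90`, and the right-hand side exceeds the total by `(4k + 1)(2k + 9) / (180(k + 4))`.
-/

open Finset

theorem sum_Icc_add_sq {K : Type*} [Field K] [CharZero K] (b : K) (n : ℕ) :
    ∑ l ∈ Icc 1 n, ((l : K) + b) ^ 2
      = n * (n + 1) * (2 * n + 1) / 6 + n * (n + 1) * b + n * b ^ 2 := by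
  induction n with
  | zero => simp
  | succ n ih =>
    rw [sum_Icc_succ_top (by omega), ih]
    push_cast
    ring

theorem sum_Icc_div_sub_half_sq {K : Type*} [Field K] [CharZero K] (n : ℕ) :
    ∑ l ∈ Icc 1 (2 * n + 1), ((l : K) / (2 * (n + 1)) - 1 / 2) ^ 2
      = (n : K) * (2 * n + 1) / (12 * (n + 1)) := by
  have hn : (n : K) + 1 ≠ 0 := Nat.cast_add_one_ne_zero n
  have hscale : ∀ l : ℕ, ((l : K) / (2 * (n + 1)) - 1 / 2) ^ 2
      = ((l : K) + -(n + 1)) ^ 2 / (4 * (n + 1) ^ 2) := fun l => by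
    field_simp
    ring
  simp only [hscale, ← sum_div, sum_Icc_add_sq]
  field_simp
  push_cast
  ring

theorem stmt_10_general (k : ℕ) :
    ((13/15 : ℚ) - 3/2) ^ 2 +
      ((16/15 : ℚ) - 3/2) ^ 2 +
      ((19/15 : ℚ) - 3/2) ^ 2 +
      ((4/3 : ℚ) - 3/2) ^ 2 +
      ((22/15 : ℚ) - 3/2) ^ 2 +
      ((23/15 : ℚ) - 3/2) ^ 2 +
      ((5/3 : ℚ) - 3/2) ^ 2 +
      ((26/15 : ℚ) - 3/2) ^ 2 +
      ((29/15 : ℚ) - 3/2) ^ 2 +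
      ((32/15 : ℚ) - 3/2) ^ 2 +
      ∑ l ∈ Finset.Icc 1 (2 * k + 7), (((l : ℚ) + 2 * (k : ℚ) + 8) / (2 * ((k : ℚ) + 4)) - 3/2) ^ 2
    ≤ ((17 + 2 * (k : ℚ)) / 12) * (32/15 - 13/15) := by
  have hsum : ∑ l ∈ Icc 1 (2 * k + 7), (((l : ℚ) + 2 * k + 8) / (2 * (k + 4)) - 3/2) ^ 2
      = ((k : ℚ) + 3) * (2 * k + 7) / (12 * (k + 4)) := by
    have hshift : ∀ l : ℕ, ((l : ℚ) + 2 * k + 8) / (2 * (k + 4)) - 3/2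
        = (l : ℚ) / (2 * ((k + 3 : ℕ) + 1)) - 1 / 2 := fun l => by
      push_cast
      field_simp
      ring
    simp only [hshift, show 2 * k + 7 = 2 * (k + 3) + 1 by ring, sum_Icc_div_sub_half_sq]
    push_cast
    ring
  rw [hsum, ← sub_nonneg]
  convert (by positivity : (0 : ℚ) ≤ (4 * k + 1) * (2 * k + 9) / (180 * (k + 4))) using 1
  field_simp
  ring

theorem stmt_10 (k : ℕ) (hk : 1 ≤ k) :
    ((13/15 : ℚ) - 3/2) ^ 2 +
      ((16/15 : ℚ) - 3/2) ^ 2 +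
      ((19/15 : ℚ) - 3/2) ^ 2 +
      ((4/3 : ℚ) - 3/2) ^ 2 +
      ((22/15 : ℚ) - 3/2) ^ 2 +
      ((23/15 : ℚ) - 3/2) ^ 2 +
      ((5/3 : ℚ) - 3/2) ^ 2 +
      ((26/15 : ℚ) - 3/2) ^ 2 +
      ((29/15 : ℚ) - 3/2) ^ 2 +
      ((32/15 : ℚ) - 3/2) ^ 2 +
      ∑ l ∈ Finset.Icc 1 (2 * k + 7), (((l : ℚ) + 2 * (k : ℚ) + 8) / (2 * ((k : ℚ) + 4)) - 3/2) ^ 2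
    ≤ ((17 + 2 * (k : ℚ)) / 12) * (32/15 - 13/15) :=
  stmt_10_general k
end

section
/- For every integer k ≥ 1, setting μ = 19 + 2k, the following inequality of rational numbers holds: (31/36 − 3/2)² + (37/36 − 3/2)² + (43/36 − 3/2)² + (47/36 − 3/2)² + (49/36 − 3/2)² + (53/36 − 3/2)² + (55/36 − 3/2)² + (59/36 − 3/2)² + (61/36 − 3/2)² + (65/36 − 3/2)² + (71/36 − 3/2)² + (77/36 − 3/2)² + ∑_{l=1}^{2k+7} ((l + 2k + 8)/(2(k+4)) − 3/2)² ≤ (μ/12)·(77/36 − 31/36). -/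
/-!
The spectrum numbers `(l + 2k + 8) / (2(k + 4))`, `1 ≤ l ≤ 2k + 7`, form an arithmetic progression
symmetric about `3/2`, so their squared deviations sum to `(k + 3)(2k + 7) / (12(k + 4))`.
The twelve fixed numbers contribute `169/108`, and the conjecture reduces to
`0 ≤ (10k² + 49k + 18) / (216(k + 4))`.
-/

open Finset

lemma sum_Icc_natCast_sub_sq {K : Type*} [Field K] [CharZero K] (c : K) (n : ℕ) :
    ∑ l ∈ Icc 1 n, ((l : K) - c) ^ 2
      = n * (n + 1) * (2 * n + 1) / 6 - c * (n * (n + 1)) + n * c ^ 2 := by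
  induction n with
  | zero => simp
  | succ m ih =>
    rw [sum_Icc_succ_top (by omega), ih]
    push_cast
    ring

lemma sum_Icc_natCast_sub_center_sq {K : Type*} [Field K] [CharZero K] (m : ℕ) :
    ∑ l ∈ Icc 1 (2 * m + 1), ((l : K) - (m + 1)) ^ 2 = (m : K) * (m + 1) * (2 * m + 1) / 3 := by
  rw [sum_Icc_natCast_sub_sq]
  push_cast
  ring

lemma spectrum_sub_center_sq (k : ℕ) (l : ℚ) :
    ((l + 2 * k + 8) / (2 * (k + 4)) - 3 / 2) ^ 2 = (l - (k + 4)) ^ 2 / (4 * ((k : ℚ) + 4) ^ 2) := by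
  field_simp
  ring

lemma sum_spectrum_sub_center_sq (k : ℕ) :
    ∑ l ∈ Icc 1 (2 * k + 7), (((l : ℚ) + 2 * k + 8) / (2 * (k + 4)) - 3 / 2) ^ 2
      = ((k : ℚ) + 3) * (2 * k + 7) / (12 * (k + 4)) := by
  simp_rw [spectrum_sub_center_sq, ← sum_div]
  have centered := sum_Icc_natCast_sub_center_sq (K := ℚ) (k + 3)
  push_cast at centered
  rw [show 2 * (k + 3) + 1 = 2 * k + 7 by omega, show (k : ℚ) + 3 + 1 = k + 4 by ring] at centered
  rw [centered]
  field_simp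
  ring

theorem stmt_14_general (k : ℕ) :
    ((31/36 : ℚ) - 3/2) ^ 2 +
      ((37/36 : ℚ) - 3/2) ^ 2 +
      ((43/36 : ℚ) - 3/2) ^ 2 +
      ((47/36 : ℚ) - 3/2) ^ 2 +
      ((49/36 : ℚ) - 3/2) ^ 2 +
      ((53/36 : ℚ) - 3/2) ^ 2 +
      ((55/36 : ℚ) - 3/2) ^ 2 +
      ((59/36 : ℚ) - 3/2) ^ 2 +
      ((61/36 : ℚ) - 3/2) ^ 2 +
      ((65/36 : ℚ) - 3/2) ^ 2 +
      ((71/36 : ℚ) - 3/2) ^ 2 +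
      ((77/36 : ℚ) - 3/2) ^ 2 +
      ∑ l ∈ Finset.Icc 1 (2 * k + 7), (((l : ℚ) + 2 * (k : ℚ) + 8) / (2 * ((k : ℚ) + 4)) - 3/2) ^ 2
    ≤ ((19 + 2 * (k : ℚ)) / 12) * (77/36 - 31/36) := by
  rw [sum_spectrum_sub_center_sq, ← sub_nonneg]
  have gap : (19 + 2 * (k : ℚ)) / 12 * (77/36 - 31/36) - (((31/36 : ℚ) - 3/2) ^ 2 +
      ((37/36 : ℚ) - 3/2) ^ 2 + ((43/36 : ℚ) - 3/2) ^ 2 + ((47/36 : ℚ) - 3/2) ^ 2 +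
      ((49/36 : ℚ) - 3/2) ^ 2 + ((53/36 : ℚ) - 3/2) ^ 2 + ((55/36 : ℚ) - 3/2) ^ 2 +
      ((59/36 : ℚ) - 3/2) ^ 2 + ((61/36 : ℚ) - 3/2) ^ 2 + ((65/36 : ℚ) - 3/2) ^ 2 +
      ((71/36 : ℚ) - 3/2) ^ 2 + ((77/36 : ℚ) - 3/2) ^ 2 + (k + 3) * (2 * k + 7) / (12 * (k + 4)))
      = (10 * k ^ 2 + 49 * k + 18) / (216 * (k + 4)) := by
    field_simp
    ring
  rw [gap]
  positivity

theorem stmt_14 (k : ℕ) (hk : 1 ≤ k) :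
    ((31/36 : ℚ) - 3/2) ^ 2 +
      ((37/36 : ℚ) - 3/2) ^ 2 +
      ((43/36 : ℚ) - 3/2) ^ 2 +
      ((47/36 : ℚ) - 3/2) ^ 2 +
      ((49/36 : ℚ) - 3/2) ^ 2 +
      ((53/36 : ℚ) - 3/2) ^ 2 +
      ((55/36 : ℚ) - 3/2) ^ 2 +
      ((59/36 : ℚ) - 3/2) ^ 2 +
      ((61/36 : ℚ) - 3/2) ^ 2 +
      ((65/36 : ℚ) - 3/2) ^ 2 +
      ((71/36 : ℚ) - 3/2) ^ 2 +
      ((77/36 : ℚ) - 3/2) ^ 2 +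
      ∑ l ∈ Finset.Icc 1 (2 * k + 7), (((l : ℚ) + 2 * (k : ℚ) + 8) / (2 * ((k : ℚ) + 4)) - 3/2) ^ 2
    ≤ ((19 + 2 * (k : ℚ)) / 12) * (77/36 - 31/36) :=
  stmt_14_general k
end

section
/- Let p, q, r be integers with 2 ≤ r ≤ q ≤ p and 1/p + 1/q + 1/r < 1. Set N = p + q + r − 2 and consider the N rational numbers consisting of 0, the numbers k/p for 1 ≤ k ≤ p−1, the numbers k/q for 1 ≤ k ≤ q−1, and the numbers k/r for 1 ≤ k ≤ r−1. Let x̄ be their average, x̄ = (p + q + r − 3)/(2(p + q + r − 2)). Then (1/N)·[ (0 − x̄)² + ∑_{k=1}^{p−1}(k/p − x̄)² + ∑_{k=1}^{q−1}(k/q − x̄)² + ∑_{k=1}^{r−1}(k/r − x̄)² ] ≤ ((p−1)/p)/12. -/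
lemma sumsq_closed (n : ℕ) (c x : ℚ) :
    ∑ k ∈ Finset.Icc 1 n, ((k : ℚ) * c - x) ^ 2 =
      (n : ℚ) * x ^ 2 - (n * (n + 1)) * c * x + (n * (n + 1) * (2 * n + 1) / 6) * c ^ 2 := by
  induction n with
  | zero => simp
  | succ m ih =>
      rw [Finset.sum_Icc_succ_top (by omega : 1 ≤ m + 1), ih]
      push_cast
      ring

lemma hertling_poly (P Q R : ℚ) (hR : 2 ≤ R) (hRQ : R ≤ Q) (hQP : Q ≤ P)
    (hs : Q * R + P * R + P * Q < P * Q * R) :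
    2 * (P + Q + R - 2) * (Q * R + P * R + P * Q) + (P + Q + R - 2) ^ 2 * (Q * R)
      ≤ (4 * (P + Q + R) - 5) * (P * Q * R) := by
  have hu : (0:ℚ) < P*Q*R - (Q*R + P*R + P*Q) := by linarith
  have hT : (0:ℚ) < P + Q + R - 2 := by linarith
  have e1 : (0:ℚ) ≤ P - Q := by linarith
  have e2 : (0:ℚ) ≤ Q - R := by linarith
  have e3 : (0:ℚ) ≤ R - 2 := by linarith
  nlinarith [mul_pos hT hu, mul_nonneg (mul_nonneg e3 (by linarith : (0:ℚ) ≤ Q)) (by linarith : (0:ℚ) ≤ R),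
    mul_nonneg (mul_nonneg e1 (by linarith : (0:ℚ) ≤ Q)) (by linarith : (0:ℚ) ≤ R),
    mul_nonneg (mul_nonneg e2 (by linarith : (0:ℚ) ≤ Q)) (by linarith : (0:ℚ) ≤ R),
    mul_nonneg e1 e2, mul_nonneg e2 e3, mul_nonneg e1 e3,
    mul_pos (mul_pos (by linarith : (0:ℚ) < P) (by linarith : (0:ℚ) < Q)) (by linarith : (0:ℚ) < R),
    mul_nonneg (mul_nonneg (mul_nonneg e1 e2) (by linarith : (0:ℚ) ≤ R)) (by linarith : (0:ℚ) ≤ R)]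

lemma main_ineq (P Q R : ℚ) (hR : 2 ≤ R) (hRQ : R ≤ Q) (hQP : Q ≤ P)
    (hs : Q * R + P * R + P * Q < P * Q * R) :
    (1 / (P + Q + R - 2)) *
      ((0 - (P + Q + R - 3) / (2 * (P + Q + R - 2))) ^ 2 +
        ((P - 1) * ((P + Q + R - 3) / (2 * (P + Q + R - 2))) ^ 2
          - ((P - 1) * P) * (1 / P) * ((P + Q + R - 3) / (2 * (P + Q + R - 2)))
          + ((P - 1) * P * (2 * (P - 1) + 1) / 6) * (1 / P) ^ 2) +
        ((Q - 1) * ((P + Q + R - 3) / (2 * (P + Q + R - 2))) ^ 2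
          - ((Q - 1) * Q) * (1 / Q) * ((P + Q + R - 3) / (2 * (P + Q + R - 2)))
          + ((Q - 1) * Q * (2 * (Q - 1) + 1) / 6) * (1 / Q) ^ 2) +
        ((R - 1) * ((P + Q + R - 3) / (2 * (P + Q + R - 2))) ^ 2
          - ((R - 1) * R) * (1 / R) * ((P + Q + R - 3) / (2 * (P + Q + R - 2)))
          + ((R - 1) * R * (2 * (R - 1) + 1) / 6) * (1 / R) ^ 2))
    ≤ ((P - 1) / P) / 12 := by
  have hP : 2 ≤ P := le_trans hR (le_trans hRQ hQP)
  have hQ : 2 ≤ Q := le_trans hR hRQ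
  have hp0 : 0 < P := by linarith
  have hq0 : 0 < Q := by linarith
  have hr0 : 0 < R := by linarith
  have hT : 0 < P + Q + R - 2 := by linarith
  have heq : (1 / (P + Q + R - 2)) *
      ((0 - (P + Q + R - 3) / (2 * (P + Q + R - 2))) ^ 2 +
        ((P - 1) * ((P + Q + R - 3) / (2 * (P + Q + R - 2))) ^ 2
          - ((P - 1) * P) * (1 / P) * ((P + Q + R - 3) / (2 * (P + Q + R - 2)))
          + ((P - 1) * P * (2 * (P - 1) + 1) / 6) * (1 / P) ^ 2) +
        ((Q - 1) * ((P + Q + R - 3) / (2 * (P + Q + R - 2))) ^ 2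
          - ((Q - 1) * Q) * (1 / Q) * ((P + Q + R - 3) / (2 * (P + Q + R - 2)))
          + ((Q - 1) * Q * (2 * (Q - 1) + 1) / 6) * (1 / Q) ^ 2) +
        ((R - 1) * ((P + Q + R - 3) / (2 * (P + Q + R - 2))) ^ 2
          - ((R - 1) * R) * (1 / R) * ((P + Q + R - 3) / (2 * (P + Q + R - 2)))
          + ((R - 1) * R * (2 * (R - 1) + 1) / 6) * (1 / R) ^ 2))
      = ((P + Q + R - 2) * (2 * (P * Q * R) * (2 * (P + Q + R) - 9)
            + 2 * (Q * R + P * R + P * Q)) - 3 * (P * Q * R) * (P + Q + R - 3) ^ 2)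
          / (12 * (P * Q * R) * (P + Q + R - 2) ^ 2) := by
    field_simp
    ring
  have heq2 : ((P - 1) / P) / 12
      = ((P - 1) * (Q * R) * (P + Q + R - 2) ^ 2)
          / (12 * (P * Q * R) * (P + Q + R - 2) ^ 2) := by
    field_simp
  rw [heq, heq2]
  have hnum := hertling_poly P Q R hR hRQ hQP hs
  gcongr
  nlinarith [hnum]

set_option maxHeartbeats 1000000 in
/-- Generalized Hertling inequality for the Tjurina spectrum of `T_{p,q,r}`. -/
theorem stmt_16 (p q r : ℕ) (hr : 2 ≤ r) (hrq : r ≤ q) (hqp : q ≤ p)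
    (hhyp : (1 : ℚ) / p + 1 / q + 1 / r < 1)
    (N : ℚ) (hN : N = (p : ℚ) + q + r - 2)
    (xbar : ℚ) (hxbar : xbar = ((p : ℚ) + q + r - 3) / (2 * ((p : ℚ) + q + r - 2))) :
    (1 / N) *
      ((0 - xbar) ^ 2 +
        ∑ k ∈ Finset.Icc 1 (p - 1), ((k : ℚ) / p - xbar) ^ 2 +
        ∑ k ∈ Finset.Icc 1 (q - 1), ((k : ℚ) / q - xbar) ^ 2 +
        ∑ k ∈ Finset.Icc 1 (r - 1), ((k : ℚ) / r - xbar) ^ 2)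
    ≤ (((p : ℚ) - 1) / p) / 12 := by
  have hp2 : 2 ≤ p := le_trans hr (le_trans hrq hqp)
  have hq2 : 2 ≤ q := le_trans hr hrq
  have hP : (2 : ℚ) ≤ (p : ℚ) := by exact_mod_cast hp2
  have hQ : (2 : ℚ) ≤ (q : ℚ) := by exact_mod_cast hq2
  have hR : (2 : ℚ) ≤ (r : ℚ) := by exact_mod_cast hr
  have hQP : (q : ℚ) ≤ (p : ℚ) := by exact_mod_cast hqp
  have hRQ : (r : ℚ) ≤ (q : ℚ) := by exact_mod_cast hrq
  have hp0 : (0 : ℚ) < p := by linarith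
  have hq0 : (0 : ℚ) < q := by linarith
  have hr0 : (0 : ℚ) < r := by linarith
  have key : ∀ m : ℕ, 2 ≤ m →
      ∑ k ∈ Finset.Icc 1 (m - 1), ((k : ℚ) / m - xbar) ^ 2 =
        ((m : ℚ) - 1) * xbar ^ 2 - (((m : ℚ) - 1) * ((m : ℚ))) * (1 / m) * xbar +
          (((m : ℚ) - 1) * ((m : ℚ)) * (2 * ((m : ℚ) - 1) + 1) / 6) * (1 / m) ^ 2 := by
    intro m hm
    have h1 : ∀ k : ℕ, (k : ℚ) / m = (k : ℚ) * (1 / m) := by intro k; ring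
    simp_rw [h1]
    rw [sumsq_closed (m - 1) (1 / m) xbar]
    have hm1 : (1:ℕ) ≤ m := by omega
    have : ((m - 1 : ℕ) : ℚ) = (m : ℚ) - 1 := by push_cast [hm1]; ring
    rw [this]
    ring
  rw [key p hp2, key q hq2, key r hr, hN, hxbar]
  have hs : (q : ℚ) * r + p * r + p * q < p * q * r := by
    have h := hhyp
    rw [div_add_div _ _ (ne_of_gt hp0) (ne_of_gt hq0),
        div_add_div _ _ (by positivity) (ne_of_gt hr0),
        div_lt_one (by positivity)] at h
    nlinarith
  exact main_ineq (p : ℚ) (q : ℚ) (r : ℚ) hR hRQ hQP hs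
end

section
/- Let p ≥ 2 be an even integer and set τ = 13 + p. Consider the τ rational numbers consisting of 9/10, 13/10, 17/10 together with 1 + k/(p+10) for 1 ≤ k ≤ p/2 + 5 and 2 − k/(p+10) for 1 ≤ k ≤ p/2 + 5. Let x̄ be their average (equal to (189 + 15p)/(130 + 10p)). Then the sum of (x − x̄)² over these τ numbers is at most (τ/12)·( (2 − 1/(p+10)) − 9/10 ). -/
/-!
Away from `9/10, 13/10, 17/10` the spectrum consists of the points `1 + k/(2n)` and `2 - k/(2n)`
(`n = p/2 + 5`, `1 ≤ k ≤ n`), which are symmetric about `3/2`. Their second moment about `3/2` is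
twice a sum of consecutive squares, `(n - 1)(2n - 1)/(12n)`. The sum of squared deviations from the mean
is at most the second moment about `3/2`, namely `11/25 + (n - 1)(2n - 1)/(12n)`, and comparing
with the right-hand side leaves `10n² + n ≥ 125`.
-/

open Finset

theorem sum_Icc_add_mul_sq {R : Type*} [CommRing R] (a b : R) (n : ℕ) :
    6 * ∑ k ∈ Icc 1 n, (a + b * k) ^ 2
      = 6 * n * a ^ 2 + 6 * a * b * (n * (n + 1)) + b ^ 2 * (n * (n + 1) * (2 * n + 1)) := by
  induction n with
  | zero => simp
  | succ n ih =>
    rw [sum_Icc_succ_top (by omega), mul_add, ih]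
    push_cast
    ring

theorem sum_Icc_div_two_mul_sub_half_sq {K : Type*} [Field K] [CharZero K] {n : ℕ} (hn : n ≠ 0) :
    ∑ k ∈ Icc 1 n, ((k : K) / (2 * n) - 1 / 2) ^ 2 = ((n : K) - 1) * (2 * n - 1) / (24 * n) := by
  have key := sum_Icc_add_mul_sq (-1 / 2 : K) (1 / (2 * n)) n
  rw [sum_congr rfl fun (k : ℕ) _ => show ((k : K) / (2 * n) - 1 / 2) ^ 2
    = (-1 / 2 + 1 / (2 * n) * k) ^ 2 by ring]
  have hn' : (n : K) ≠ 0 := Nat.cast_ne_zero.mpr hn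
  field_simp at key ⊢
  linear_combination key

theorem sum_sq_sub_add_sum_sq_sub_of_add_eq {ι K : Type*} [CommRing K] (s : Finset ι)
    (u v : ι → K) (c x : K) (huv : ∀ i ∈ s, u i + v i = 2 * c) :
    ∑ i ∈ s, (u i - x) ^ 2 + ∑ i ∈ s, (v i - x) ^ 2
      = 2 * ∑ i ∈ s, (u i - c) ^ 2 + 2 * #s * (c - x) ^ 2 := by
  rw [← sum_add_distrib, card_eq_sum_ones, Nat.cast_sum, mul_sum, mul_sum, sum_mul,
    ← sum_add_distrib]
  refine sum_congr rfl fun i hi => ?_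
  rw [eq_sub_of_add_eq' (huv i hi)]
  push_cast
  ring

theorem hertling_inequality_S_sharp_1 (n : ℕ) (hn : 4 ≤ n) (x : ℚ)
    (hx : x = (30 * n + 39) / (10 * (2 * n + 3))) :
    (9/10 - x) ^ 2 + (13/10 - x) ^ 2 + (17/10 - x) ^ 2
      + ∑ k ∈ Icc 1 n, (1 + (k : ℚ) / (2 * n) - x) ^ 2
      + ∑ k ∈ Icc 1 n, (2 - (k : ℚ) / (2 * n) - x) ^ 2
      ≤ (2 * n + 3) / 12 * (2 - 1 / (2 * n) - 9/10) := by
  have hn0 : (n : ℚ) ≠ 0 := by positivity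
  have hpairs := sum_sq_sub_add_sum_sq_sub_of_add_eq (Icc 1 n)
    (fun k => 1 + (k : ℚ) / (2 * n)) (fun k => 2 - (k : ℚ) / (2 * n)) (3 / 2) x
    (fun _ _ => by ring)
  have hsq : ∑ k ∈ Icc 1 n, (1 + (k : ℚ) / (2 * n) - 3 / 2) ^ 2
      = ((n : ℚ) - 1) * (2 * n - 1) / (24 * n) := by
    rw [← sum_Icc_div_two_mul_sub_half_sq (by omega)]
    exact sum_congr rfl fun k _ => by ring
  rw [hsq, Nat.card_Icc, add_tsub_cancel_right] at hpairs
  -- `x` is the mean of the `2n + 3` points, whose deviations from `3/2` add up to `-3/5`.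
  have hshift : (2 * n + 3) * (3 / 2 - x) = 3 / 5 := by
    rw [hx]
    field_simp
    ring
  have hshift_nonneg : 0 ≤ 3 / 2 - x := by nlinarith [hshift]
  calc _ = 11 / 25 + ((n : ℚ) - 1) * (2 * n - 1) / (12 * n) - 3 / 5 * (3 / 2 - x) := by
        rw [add_assoc _ (∑ k ∈ Icc 1 n, _), hpairs]
        linear_combination (3 / 2 - x) * hshift
    _ ≤ 11 / 25 + ((n : ℚ) - 1) * (2 * n - 1) / (12 * n) := by linarith
    _ ≤ _ := by
      rw [← sub_nonneg]
      have hgap : (2 * n + 3) / 12 * (2 - 1 / (2 * n) - 9/10)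
          - (11 / 25 + ((n : ℚ) - 1) * (2 * n - 1) / (12 * n))
          = (10 * n ^ 2 + n - 125) / (600 * n) := by
        field_simp
        ring
      rw [hgap]
      have hn4 : (4 : ℚ) ≤ n := by exact_mod_cast hn
      apply div_nonneg <;> nlinarith

theorem stmt_18_general (p : ℕ) (hpe : Even p)
    (τ : ℚ) (hτ : τ = 13 + (p : ℚ))
    (xbar : ℚ) (hxbar : xbar = (189 + 15 * (p : ℚ)) / (130 + 10 * (p : ℚ))) :
    ((9/10 : ℚ) - xbar) ^ 2 + ((13/10 : ℚ) - xbar) ^ 2 + ((17/10 : ℚ) - xbar) ^ 2 +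
      ∑ k ∈ Finset.Icc 1 (p / 2 + 5),
        ((1 + (k : ℚ) / ((p : ℚ) + 10)) - xbar) ^ 2 +
      ∑ k ∈ Finset.Icc 1 (p / 2 + 5),
        ((2 - (k : ℚ) / ((p : ℚ) + 10)) - xbar) ^ 2
    ≤ (τ / 12) * ((2 - 1 / ((p : ℚ) + 10)) - 9/10) := by
  obtain ⟨m, rfl⟩ := hpe
  have hn : (m + m) / 2 + 5 = m + 5 := by omega
  have hN : ((m + m : ℕ) : ℚ) + 10 = 2 * ((m + 5 : ℕ) : ℚ) := by push_cast; ring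
  have hτ' : τ = 2 * ((m + 5 : ℕ) : ℚ) + 3 := by rw [hτ]; push_cast; ring
  rw [hn, hN, hτ']
  refine hertling_inequality_S_sharp_1 (m + 5) (by omega) xbar ?_
  rw [hxbar]
  push_cast
  ring

/-- Generalized Hertling inequality for the Tjurina spectrum of `S^#_{1,p}` (`p` even). -/
theorem stmt_18 (p : ℕ) (hp : 2 ≤ p) (hpe : Even p)
    (τ : ℚ) (hτ : τ = 13 + (p : ℚ))
    (xbar : ℚ) (hxbar : xbar = (189 + 15 * (p : ℚ)) / (130 + 10 * (p : ℚ))) :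
    ((9/10 : ℚ) - xbar) ^ 2 + ((13/10 : ℚ) - xbar) ^ 2 + ((17/10 : ℚ) - xbar) ^ 2 +
      ∑ k ∈ Finset.Icc 1 (p / 2 + 5),
        ((1 + (k : ℚ) / ((p : ℚ) + 10)) - xbar) ^ 2 +
      ∑ k ∈ Finset.Icc 1 (p / 2 + 5),
        ((2 - (k : ℚ) / ((p : ℚ) + 10)) - xbar) ^ 2
    ≤ (τ / 12) * ((2 - 1 / ((p : ℚ) + 10)) - 9/10) :=
  stmt_18_general p hpe τ hτ xbar hxbar
end
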